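/- arXiv:2512.12382 — 5 statements merged into one kernel-verified Lean document; each statement's English description precedes it below -/
import Mathlib

section
/- Let A be a complex Banach space, γ : ℤ → ℝ with γ(n) > 0 for all n, and let 0 ≤ r ≤ t, α ∈ [0,1], and s = α·r + (1−α)·t. Let f : AddCircle 1 → A be integrable, and assume both families n ↦ (1 + γ(n)^2)^(r/2) ‖fourierCoeff f n‖ and n ↦ (1 + γ(n)^2)^(t/2) ‖fourierCoeff f n‖ are summable over ℤ. Then ∑'_{n} (1 + γ(n)^2)^(s/2) ‖fourierCoeff f n‖ ≤ (∑'_{n} (1 + γ(n)^2)^(r/2) ‖fourierCoeff f n‖)^α · (∑'_{n} (1 + γ(n)^2)^(t/2) ‖fourierCoeff f n‖)^(1−α). (Interpolation inequality ‖f‖_{𝔅^s_γ} ≤ ‖f‖_{𝔅^r_γ}^α ‖f‖_{𝔅^t_γ}^{1−α} on the torus.) -/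
open MeasureTheory AddCircle

/-!
The weight of order `s` factors as the product of the weights of orders `r` and `t` raised to
`α` and `1 - α`, so the `s`-th Barron sum is `∑ aₙ ^ α * bₙ ^ (1 - α)` for the summands `aₙ`, `bₙ`
of the `r`- and `t`-th sums. Hölder's inequality with exponents `1 / α` and `1 / (1 - α)` bounds
this by `(∑ aₙ) ^ α * (∑ bₙ) ^ (1 - α)`.
-/

namespace Real

theorem tsum_rpow_mul_rpow_one_sub_le {ι : Type*} {a b : ι → ℝ} {α : ℝ}
    (ha : ∀ i, 0 ≤ a i) (hb : ∀ i, 0 ≤ b i) (ha_sum : Summable a) (hb_sum : Summable b)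
    (hα0 : 0 ≤ α) (hα1 : α ≤ 1) :
    ∑' i, a i ^ α * b i ^ (1 - α) ≤ (∑' i, a i) ^ α * (∑' i, b i) ^ (1 - α) := by
  rcases hα0.eq_or_lt with rfl | hα0
  · simp
  rcases hα1.eq_or_lt with rfl | hα1
  · simp
  have hα1' : 1 - α ≠ 0 := by linarith
  have holder := inner_le_Lp_mul_Lq_tsum_of_nonneg (HolderConjugate.inv_one_sub_inv hα0 hα1)
    (fun i => rpow_nonneg (ha i) α) (fun i => rpow_nonneg (hb i) (1 - α))
    (by simpa only [rpow_rpow_inv (ha _) hα0.ne'] using ha_sum)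
    (by simpa only [rpow_rpow_inv (hb _) hα1'] using hb_sum)
  simpa only [rpow_rpow_inv (ha _) hα0.ne', rpow_rpow_inv (hb _) hα1', one_div, inv_inv]
    using holder

theorem rpow_mul_eq_rpow_mul_rpow_one_sub {w c : ℝ} (hw : 0 < w) (hc : 0 ≤ c) (r t α : ℝ) :
    w ^ (α * r + (1 - α) * t) * c = (w ^ r * c) ^ α * (w ^ t * c) ^ (1 - α) := by
  rw [mul_rpow (rpow_nonneg hw.le r) hc, mul_rpow (rpow_nonneg hw.le t) hc,
    ← rpow_mul hw.le, ← rpow_mul hw.le, mul_mul_mul_comm, ← rpow_add hw,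
    ← rpow_add' hc (by norm_num : α + (1 - α) ≠ 0), add_sub_cancel, rpow_one]
  congr 2
  ring

end Real

theorem barron_interpolation_general
    {A : Type} [NormedAddCommGroup A] [NormedSpace ℂ A]
    (γ : ℤ → ℝ) (r t α s : ℝ)
    (hα0 : 0 ≤ α) (hα1 : α ≤ 1) (hsdef : s = α * r + (1 - α) * t)
    (f : AddCircle (1 : ℝ) → A)
    (hsumr : Summable fun n : ℤ => (1 + γ n ^ 2) ^ (r / 2) * ‖fourierCoeff f n‖)
    (hsumt : Summable fun n : ℤ => (1 + γ n ^ 2) ^ (t / 2) * ‖fourierCoeff f n‖) :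
    (∑' n : ℤ, (1 + γ n ^ 2) ^ (s / 2) * ‖fourierCoeff f n‖) ≤
      (∑' n : ℤ, (1 + γ n ^ 2) ^ (r / 2) * ‖fourierCoeff f n‖) ^ α *
        (∑' n : ℤ, (1 + γ n ^ 2) ^ (t / 2) * ‖fourierCoeff f n‖) ^ (1 - α) := by
  have hweight (n : ℤ) : (0 : ℝ) < 1 + γ n ^ 2 := by positivity
  have hs : s / 2 = α * (r / 2) + (1 - α) * (t / 2) := by rw [hsdef]; ring
  simp only [hs, Real.rpow_mul_eq_rpow_mul_rpow_one_sub (hweight _) (norm_nonneg _)]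
  exact Real.tsum_rpow_mul_rpow_one_sub_le
    (fun n => mul_nonneg (Real.rpow_nonneg (hweight n).le _) (norm_nonneg _))
    (fun n => mul_nonneg (Real.rpow_nonneg (hweight n).le _) (norm_nonneg _))
    hsumr hsumt hα0 hα1

theorem barron_interpolation
    {A : Type} [NormedAddCommGroup A] [NormedSpace ℂ A] [CompleteSpace A]
    (γ : ℤ → ℝ) (hγ : ∀ n, 0 < γ n) (r t α s : ℝ) (hr : 0 ≤ r) (hrt : r ≤ t)
    (hα0 : 0 ≤ α) (hα1 : α ≤ 1) (hsdef : s = α * r + (1 - α) * t)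
    (f : AddCircle (1 : ℝ) → A) (hf : Integrable f haarAddCircle)
    (hsumr : Summable fun n : ℤ => (1 + γ n ^ 2) ^ (r / 2) * ‖fourierCoeff f n‖)
    (hsumt : Summable fun n : ℤ => (1 + γ n ^ 2) ^ (t / 2) * ‖fourierCoeff f n‖) :
    (∑' n : ℤ, (1 + γ n ^ 2) ^ (s / 2) * ‖fourierCoeff f n‖) ≤
      (∑' n : ℤ, (1 + γ n ^ 2) ^ (r / 2) * ‖fourierCoeff f n‖) ^ α *
        (∑' n : ℤ, (1 + γ n ^ 2) ^ (t / 2) * ‖fourierCoeff f n‖) ^ (1 - α) :=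
  barron_interpolation_general γ r t α s hα0 hα1 hsdef f hsumr hsumt
end

section
/- Let A be a complex Banach space, γ : ℤ → ℝ with γ(n) > 0 for all n, and let s, t ≥ 0 be real numbers. Assume the family n ↦ (1 + γ(n)^2)^(t−s) is summable over ℤ, with sum κ. Let f : AddCircle 1 → A be integrable and assume the family n ↦ (1 + γ(n)^2)^s ‖fourierCoeff f n‖^2 is summable over ℤ. Then ∑'_{n} (1 + γ(n)^2)^(t/2) ‖fourierCoeff f n‖ ≤ κ^(1/2) · (∑'_{n} (1 + γ(n)^2)^s ‖fourierCoeff f n‖^2)^(1/2). (Continuous embedding of the Sobolev space H^s_γ into the spectral Barron space 𝔅^t_γ on the torus.) -/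
open MeasureTheory AddCircle

lemma tsum_cauchy_schwarz {ι : Type*} {a b : ι → ℝ} (ha : ∀ i, 0 ≤ a i) (hb : ∀ i, 0 ≤ b i)
    (ha2 : Summable fun i => a i ^ 2) (hb2 : Summable fun i => b i ^ 2) :
    (∑' i, a i * b i) ≤ (∑' i, a i ^ 2) ^ ((1:ℝ)/2) * (∑' i, b i ^ 2) ^ ((1:ℝ)/2) := by
  have hab : Summable fun i => a i * b i := by
    refine Summable.of_nonneg_of_le (fun i => mul_nonneg (ha i) (hb i))
      (fun i => ?_) ((ha2.add hb2).div_const 2)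
    have := sq_nonneg (a i - b i)
    nlinarith
  have hA : 0 ≤ ∑' i, a i ^ 2 := tsum_nonneg fun i => sq_nonneg _
  have hB : 0 ≤ ∑' i, b i ^ 2 := tsum_nonneg fun i => sq_nonneg _
  have h2 : (∑' i, a i * b i) ≤ Real.sqrt ((∑' i, a i ^ 2) * (∑' i, b i ^ 2)) := by
    refine Summable.tsum_le_of_sum_le hab fun s => ?_
    have h1 : (∑ i ∈ s, a i * b i) ^ 2 ≤ (∑' i, a i ^ 2) * (∑' i, b i ^ 2) :=
      calc (∑ i ∈ s, a i * b i) ^ 2 ≤ (∑ i ∈ s, a i ^ 2) * (∑ i ∈ s, b i ^ 2) :=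
            Finset.sum_mul_sq_le_sq_mul_sq s a b
        _ ≤ (∑' i, a i ^ 2) * (∑' i, b i ^ 2) := by
            have g1 := Summable.sum_le_tsum s (fun i _ => sq_nonneg (a i)) ha2
            have g2 := Summable.sum_le_tsum s (fun i _ => sq_nonneg (b i)) hb2
            have n1 : (0:ℝ) ≤ ∑ i ∈ s, a i ^ 2 := Finset.sum_nonneg fun i _ => sq_nonneg _
            have n2 : (0:ℝ) ≤ ∑ i ∈ s, b i ^ 2 := Finset.sum_nonneg fun i _ => sq_nonneg _
            exact mul_le_mul g1 g2 n2 hA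
    have hs : 0 ≤ ∑ i ∈ s, a i * b i :=
      Finset.sum_nonneg fun i _ => mul_nonneg (ha i) (hb i)
    calc (∑ i ∈ s, a i * b i) = Real.sqrt ((∑ i ∈ s, a i * b i) ^ 2) :=
          (Real.sqrt_sq hs).symm
      _ ≤ Real.sqrt ((∑' i, a i ^ 2) * (∑' i, b i ^ 2)) := Real.sqrt_le_sqrt h1
  calc ∑' i, a i * b i ≤ Real.sqrt ((∑' i, a i ^ 2) * (∑' i, b i ^ 2)) := h2
    _ = (∑' i, a i ^ 2) ^ ((1:ℝ)/2) * (∑' i, b i ^ 2) ^ ((1:ℝ)/2) := by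
        rw [Real.sqrt_eq_rpow, Real.mul_rpow hA hB]

theorem sobolev_embeds_barron
    {A : Type} [NormedAddCommGroup A] [NormedSpace ℂ A] [CompleteSpace A]
    (γ : ℤ → ℝ) (hγ : ∀ n, 0 < γ n) (s t : ℝ) (hs : 0 ≤ s) (ht : 0 ≤ t)
    (κ : ℝ) (hκ : HasSum (fun n : ℤ => (1 + γ n ^ 2) ^ (t - s)) κ)
    (f : AddCircle (1 : ℝ) → A) (hf : Integrable f haarAddCircle)
    (hsum : Summable fun n : ℤ => (1 + γ n ^ 2) ^ s * ‖fourierCoeff f n‖ ^ 2) :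
    (∑' n : ℤ, (1 + γ n ^ 2) ^ (t / 2) * ‖fourierCoeff f n‖) ≤
      κ ^ ((1 : ℝ) / 2) *
        (∑' n : ℤ, (1 + γ n ^ 2) ^ s * ‖fourierCoeff f n‖ ^ 2) ^ ((1 : ℝ) / 2) := by
  have hpos : ∀ n : ℤ, (0:ℝ) < 1 + γ n ^ 2 := fun n => by positivity
  set a : ℤ → ℝ := fun n => (1 + γ n ^ 2) ^ ((t - s) / 2) with ha_def
  set b : ℤ → ℝ := fun n => (1 + γ n ^ 2) ^ (s / 2) * ‖fourierCoeff f n‖ with hb_def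
  have ha : ∀ n, 0 ≤ a n := fun n => (Real.rpow_pos_of_pos (hpos n) _).le
  have hb : ∀ n, 0 ≤ b n := fun n =>
    mul_nonneg (Real.rpow_pos_of_pos (hpos n) _).le (norm_nonneg _)
  have ha2 : ∀ n, a n ^ 2 = (1 + γ n ^ 2) ^ (t - s) := fun n => by
    rw [ha_def, ← Real.rpow_natCast (_ ^ _) 2, ← Real.rpow_mul (hpos n).le]
    norm_num
  have hb2 : ∀ n, b n ^ 2 = (1 + γ n ^ 2) ^ s * ‖fourierCoeff f n‖ ^ 2 := fun n => by
    rw [hb_def, mul_pow, ← Real.rpow_natCast ((1 + γ n ^ 2) ^ (s/2)) 2,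
      ← Real.rpow_mul (hpos n).le]
    norm_num
  have hab : ∀ n, a n * b n = (1 + γ n ^ 2) ^ (t / 2) * ‖fourierCoeff f n‖ := fun n => by
    rw [ha_def, hb_def, ← mul_assoc, ← Real.rpow_add (hpos n)]
    ring_nf
  have hsa : Summable fun n => a n ^ 2 := by
    simpa only [ha2] using hκ.summable
  have hsb : Summable fun n => b n ^ 2 := by simpa only [hb2] using hsum
  have := tsum_cauchy_schwarz ha hb hsa hsb
  simp only [hab, ha2, hb2] at this
  rwa [hκ.tsum_eq] at this
end

section
/- Let A be a complex Banach space, γ : ℤ → ℝ with γ(n) > 0 for all n, let s, t ≥ 0, and let a : ℤ → ℂ be a symbol satisfying (1 + γ(n)^2)^((s−t)/2) · |a(n)| ≤ C for all n ∈ ℤ, for some constant C ≥ 0. Let f : AddCircle 1 → A be integrable and suppose the family n ↦ (1 + γ(n)^2)^(t/2) ‖fourierCoeff f n‖ is summable over ℤ. Then ∑'_{n} (1 + γ(n)^2)^(s/2) ‖a(n) • fourierCoeff f n‖ ≤ C · ∑'_{n} (1 + γ(n)^2)^(t/2) ‖fourierCoeff f n‖. (Boundedness of the Fourier-multiplier (pseudo-differential)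 operator with symbol a from 𝔅^t_γ to 𝔅^s_γ on the torus.) -/
open MeasureTheory AddCircle

/-!
The weight $(1+γ(n)^2)^{s/2}$ factors as $(1+γ(n)^2)^{(s-t)/2}(1+γ(n)^2)^{t/2}$, and the first
factor times $|a(n)|$ is at most $C$; so the bound holds term by term, and the $𝔅^t_γ$ series
dominates the $𝔅^s_γ$ series of the image.
-/

theorem tsum_le_mul_tsum_of_le {ι : Type*} {f g : ι → ℝ} {C : ℝ} (hf : ∀ i, 0 ≤ f i)
    (hfg : ∀ i, f i ≤ C * g i) (hg : Summable g) : ∑' i, f i ≤ C * ∑' i, g i := by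
  rw [← tsum_mul_left]
  exact (hg.mul_left C).of_nonneg_of_le hf hfg |>.tsum_le_tsum hfg (hg.mul_left C)

theorem rpow_mul_norm_smul_le {𝕜 E : Type*} [NormedField 𝕜] [SeminormedAddCommGroup E]
    [NormedSpace 𝕜 E] {x : ℝ} (hx : 0 < x) {s t C : ℝ} {k : 𝕜} (hk : x ^ ((s - t) / 2) * ‖k‖ ≤ C)
    (v : E) : x ^ (s / 2) * ‖k • v‖ ≤ C * (x ^ (t / 2) * ‖v‖) := by
  have hsplit : x ^ (s / 2) = x ^ ((s - t) / 2) * x ^ (t / 2) := by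
    rw [← Real.rpow_add hx]; ring_nf
  calc x ^ (s / 2) * ‖k • v‖ = (x ^ ((s - t) / 2) * ‖k‖) * (x ^ (t / 2) * ‖v‖) := by
        rw [hsplit, norm_smul]; ring
    _ ≤ C * (x ^ (t / 2) * ‖v‖) := by gcongr

theorem pseudodifferential_bounded_general
    {A : Type} [NormedAddCommGroup A] [NormedSpace ℂ A]
    (γ : ℤ → ℝ) (s t : ℝ)
    (a : ℤ → ℂ) (C : ℝ)
    (ha : ∀ n : ℤ, (1 + γ n ^ 2) ^ ((s - t) / 2) * ‖a n‖ ≤ C)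
    (f : AddCircle (1 : ℝ) → A)
    (hsum : Summable fun n : ℤ => (1 + γ n ^ 2) ^ (t / 2) * ‖fourierCoeff f n‖) :
    (∑' n : ℤ, (1 + γ n ^ 2) ^ (s / 2) * ‖a n • fourierCoeff f n‖) ≤
      C * ∑' n : ℤ, (1 + γ n ^ 2) ^ (t / 2) * ‖fourierCoeff f n‖ :=
  tsum_le_mul_tsum_of_le (fun n => by positivity)
    (fun n => rpow_mul_norm_smul_le (by positivity) (ha n) _) hsum

theorem pseudodifferential_bounded
    {A : Type} [NormedAddCommGroup A] [NormedSpace ℂ A] [CompleteSpace A]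
    (γ : ℤ → ℝ) (hγ : ∀ n, 0 < γ n) (s t : ℝ) (hs : 0 ≤ s) (ht : 0 ≤ t)
    (a : ℤ → ℂ) (C : ℝ) (hC : 0 ≤ C)
    (ha : ∀ n : ℤ, (1 + γ n ^ 2) ^ ((s - t) / 2) * ‖a n‖ ≤ C)
    (f : AddCircle (1 : ℝ) → A) (hf : Integrable f haarAddCircle)
    (hsum : Summable fun n : ℤ => (1 + γ n ^ 2) ^ (t / 2) * ‖fourierCoeff f n‖) :
    (∑' n : ℤ, (1 + γ n ^ 2) ^ (s / 2) * ‖a n • fourierCoeff f n‖) ≤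
      C * ∑' n : ℤ, (1 + γ n ^ 2) ^ (t / 2) * ‖fourierCoeff f n‖ :=
  pseudodifferential_bounded_general γ s t a C ha f hsum
end

section
/- Let A be a complex Banach algebra, γ : ℤ → ℝ with γ(n) > 0 for all n, and s ≥ 0. Let f : AddCircle 1 → A be integrable with L¹ norm ‖f‖_{L¹} = ∫ ‖f(x)‖ dx, and let g : AddCircle 1 → A be integrable with the family n ↦ (1 + γ(n)^2)^(s/2) ‖fourierCoeff g n‖ summable over ℤ. Then, for the convolution (f ⋆ g)(x) = ∫ f(y) · g(x − y) dy, the family n ↦ (1 + γ(n)^2)^(s/2) ‖fourierCoeff (f ⋆ g) n‖ is summable and ∑'_{n} (1 + γ(n)^2)^(s/2) ‖fourierCoeff (f ⋆ g) n‖ ≤ ‖f‖_{L¹} · ∑'_{n} (1 + γ(n)^2)^(s/2) ‖fourierCoeff g n‖. (Torus instance, with ρ = sup d_σ = 1 since the torus is abelian, of the convolution theorem ‖f ⋆ g‖_{𝔅^s_γ} ≤ ρ ‖f‖_{L¹} ‖g‖_{𝔅^s_γ}.) -/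
open MeasureTheory AddCircle
open scoped Convolution

/-!
Twisting by the character `e_{-n}` commutes with convolution, because
`e_{-n}(y) e_{-n}(x - y) = e_{-n}(x)`; integrating then turns the `n`-th Fourier coefficient of
`f ⋆ g` into the product of those of `f` and `g`. Since `|e_{-n}| = 1`, the coefficients of `f`
are bounded by `‖f‖_{L¹}`, and the weighted estimate follows termwise.
-/

namespace AddCircle

variable {T : ℝ}

theorem fourier_apply_add (n : ℤ) (x y : AddCircle T) :
    fourier n (x + y) = fourier n x * fourier n y := by
  simp_rw [fourier_apply, smul_add, toCircle_add, Circle.coe_mul]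

theorem fourier_smul_convolution_apply {A : Type*} [NormedRing A] [NormedAlgebra ℂ A]
    (μ : Measure (AddCircle T)) (f g : AddCircle T → A) (n : ℤ) (x : AddCircle T) :
    fourier n x • (f ⋆[ContinuousLinearMap.mul ℂ A, μ] g) x =
      ((fun y => fourier n y • f y) ⋆[ContinuousLinearMap.mul ℂ A, μ]
        fun y => fourier n y • g y) x := by
  simp only [convolution_def, ← integral_smul, ContinuousLinearMap.mul_apply',
    smul_mul_smul_comm, ← fourier_apply_add, add_sub_cancel]

variable [Fact (0 < T)]

theorem integrable_fourier_smul {E : Type*} [NormedAddCommGroup E] [NormedSpace ℂ E]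
    {f : AddCircle T → E} (hf : Integrable f haarAddCircle) (n : ℤ) :
    Integrable (fun x => fourier n x • f x) haarAddCircle :=
  hf.bdd_smul 1 (map_continuous _).aestronglyMeasurable
    (.of_forall fun _ => (Circle.norm_coe _).le)

theorem norm_fourierCoeff_le_integral_norm {E : Type*} [NormedAddCommGroup E] [NormedSpace ℂ E]
    (f : AddCircle T → E) (n : ℤ) :
    ‖fourierCoeff f n‖ ≤ ∫ x, ‖f x‖ ∂haarAddCircle :=
  (norm_integral_le_integral_norm _).trans_eq <| by
    simp only [norm_smul, fourier_apply, Circle.norm_coe, one_mul]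

variable {A : Type*} [NormedRing A] [NormedAlgebra ℂ A] [CompleteSpace A]
  {f g : AddCircle T → A}

theorem fourierCoeff_convolution (hf : Integrable f haarAddCircle)
    (hg : Integrable g haarAddCircle) (n : ℤ) :
    fourierCoeff (f ⋆[ContinuousLinearMap.mul ℂ A, haarAddCircle] g) n =
      fourierCoeff f n * fourierCoeff g n := by
  simp only [fourierCoeff, fourier_smul_convolution_apply]
  exact integral_convolution _ (integrable_fourier_smul hf _) (integrable_fourier_smul hg _)

theorem norm_fourierCoeff_convolution_le (hf : Integrable f haarAddCircle)
    (hg : Integrable g haarAddCircle) (n : ℤ) :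
    ‖fourierCoeff (f ⋆[ContinuousLinearMap.mul ℂ A, haarAddCircle] g) n‖ ≤
      (∫ x, ‖f x‖ ∂haarAddCircle) * ‖fourierCoeff g n‖ := by
  rw [fourierCoeff_convolution hf hg]
  exact (norm_mul_le _ _).trans <|
    mul_le_mul_of_nonneg_right (norm_fourierCoeff_le_integral_norm f n) (norm_nonneg _)

theorem summable_weighted_norm_fourierCoeff_convolution (w : ℤ → ℝ) (hw : ∀ n, 0 ≤ w n)
    (hf : Integrable f haarAddCircle) (hg : Integrable g haarAddCircle)
    (hsum : Summable fun n => w n * ‖fourierCoeff g n‖) :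
    (Summable fun n => w n *
        ‖fourierCoeff (f ⋆[ContinuousLinearMap.mul ℂ A, haarAddCircle] g) n‖) ∧
      ∑' n, w n * ‖fourierCoeff (f ⋆[ContinuousLinearMap.mul ℂ A, haarAddCircle] g) n‖ ≤
        (∫ x, ‖f x‖ ∂haarAddCircle) * ∑' n, w n * ‖fourierCoeff g n‖ := by
  have hle : ∀ n,
      w n * ‖fourierCoeff (f ⋆[ContinuousLinearMap.mul ℂ A, haarAddCircle] g) n‖ ≤
        (∫ x, ‖f x‖ ∂haarAddCircle) * (w n * ‖fourierCoeff g n‖) := fun n => by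
    rw [mul_left_comm]
    exact mul_le_mul_of_nonneg_left (norm_fourierCoeff_convolution_le hf hg n) (hw n)
  have hsum' := hsum.mul_left (∫ x, ‖f x‖ ∂haarAddCircle)
  have hS := hsum'.of_nonneg_of_le (fun n => mul_nonneg (hw n) (norm_nonneg _)) hle
  exact ⟨hS, (hS.tsum_le_tsum hle hsum').trans_eq tsum_mul_left⟩

end AddCircle

theorem convolution_barron_bound_general
    {A : Type} [NormedRing A] [NormedAlgebra ℂ A] [CompleteSpace A]
    (γ : ℤ → ℝ) (s : ℝ)
    (f g : AddCircle (1 : ℝ) → A)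
    (hf : Integrable f haarAddCircle) (hg : Integrable g haarAddCircle)
    (hsum : Summable fun n : ℤ => (1 + γ n ^ 2) ^ (s / 2) * ‖fourierCoeff g n‖) :
    (Summable fun n : ℤ => (1 + γ n ^ 2) ^ (s / 2) *
        ‖fourierCoeff (f ⋆[ContinuousLinearMap.mul ℂ A, haarAddCircle] g) n‖) ∧
      (∑' n : ℤ, (1 + γ n ^ 2) ^ (s / 2) *
          ‖fourierCoeff (f ⋆[ContinuousLinearMap.mul ℂ A, haarAddCircle] g) n‖) ≤
        (∫ x, ‖f x‖ ∂(haarAddCircle)) *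
          ∑' n : ℤ, (1 + γ n ^ 2) ^ (s / 2) * ‖fourierCoeff g n‖ :=
  summable_weighted_norm_fourierCoeff_convolution _
    (fun _ => Real.rpow_nonneg (by positivity) _) hf hg hsum

theorem convolution_barron_bound
    {A : Type} [NormedRing A] [NormedAlgebra ℂ A] [CompleteSpace A]
    (γ : ℤ → ℝ) (hγ : ∀ n, 0 < γ n) (s : ℝ) (hs : 0 ≤ s)
    (f g : AddCircle (1 : ℝ) → A)
    (hf : Integrable f haarAddCircle) (hg : Integrable g haarAddCircle)
    (hsum : Summable fun n : ℤ => (1 + γ n ^ 2) ^ (s / 2) * ‖fourierCoeff g n‖) :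
    (Summable fun n : ℤ => (1 + γ n ^ 2) ^ (s / 2) *
        ‖fourierCoeff (f ⋆[ContinuousLinearMap.mul ℂ A, haarAddCircle] g) n‖) ∧
      (∑' n : ℤ, (1 + γ n ^ 2) ^ (s / 2) *
          ‖fourierCoeff (f ⋆[ContinuousLinearMap.mul ℂ A, haarAddCircle] g) n‖) ≤
        (∫ x, ‖f x‖ ∂(haarAddCircle)) *
          ∑' n : ℤ, (1 + γ n ^ 2) ^ (s / 2) * ‖fourierCoeff g n‖ :=
  convolution_barron_bound_general γ s f g hf hg hsum
end

section
/- Let A be a complex Banach space, γ : ℤ → ℝ with γ(n) > 0 for all n, and s > 0. Let g : AddCircle 1 → A be integrable with n ↦ ‖fourierCoeff g n‖ summable over ℤ. Then there exists a continuous function h : AddCircle 1 → A such that for all n ∈ ℤ, fourierCoeff h n = ((1 + γ(n)^2)^(−s) : ℝ) • fourierCoeff g n; moreover the family n ↦ (1 + γ(n)^2)^s ‖fourierCoeff h n‖ is summable and ∑'_{n} (1 + γ(n)^2)^s ‖fourierCoeff h n‖ = ∑'_{n} ‖fourierCoeff g n‖. (Torus instance of the theorem that (I − Δ)^s is a surjective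 isometry from 𝔅^{2s}_γ onto 𝔅^0_γ: h satisfies (I − Δ)^s h = g and ‖h‖_{𝔅^{2s}_γ} = ‖g‖_{𝔅^0_γ}.) -/
/-!
An absolutely summable coefficient sequence `c` is the Fourier transform of its Fourier series
`∑ₙ e_n • c n`: the series converges uniformly, so its sum is continuous, and integrating it
term by term against `e_{-m}` picks out `c m` by orthonormality. Apply this to
`c n = (1 + γ n ^ 2) ^ (-s) • ĝ n`, which is dominated by `ĝ n` because the weights are `≥ 1`;
the weighted norms `(1 + γ n ^ 2) ^ s ‖c n‖` are then exactly `‖ĝ n‖`.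
-/

open MeasureTheory AddCircle

section FourierSeries

variable {T : ℝ} {E : Type*} [NormedAddCommGroup E] [NormedSpace ℂ E]

lemma norm_fourier_smul (n : ℤ) (x : AddCircle T) (a : E) : ‖fourier n x • a‖ = ‖a‖ := by
  rw [norm_smul, fourier_apply, Circle.norm_coe, one_mul]

noncomputable def fourierSeries (c : ℤ → E) (x : AddCircle T) : E :=
  ∑' n : ℤ, fourier n x • c n

lemma continuous_fourierSeries [CompleteSpace E] {c : ℤ → E} (hc : Summable fun n => ‖c n‖) :
    Continuous (fourierSeries (T := T) c) :=
  continuous_tsum (fun n => (fourier n).continuous.smul continuous_const) hc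
    fun n x => (norm_fourier_smul n x (c n)).le

variable [Fact (0 < T)]

lemma fourierCoeff_tsum {ι : Type*} [Countable ι] {f : ι → AddCircle T → E}
    (hf : ∀ i, Integrable (f i) haarAddCircle)
    (hsum : Summable fun i => ∫ x, ‖f i x‖ ∂haarAddCircle) (n : ℤ) :
    fourierCoeff (fun x => ∑' i, f i x) n = ∑' i, fourierCoeff (f i) n := by
  simp_rw [fourierCoeff, ← tsum_const_smul'']
  refine (integral_tsum_of_summable_integral_norm (fun i => (hf i).fourier_smul (-n)) ?_).symm
  simpa only [norm_fourier_smul] using hsum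

variable [CompleteSpace E]

lemma fourierCoeff_smul_const (f : AddCircle T → ℂ) (a : E) (n : ℤ) :
    fourierCoeff (fun x => f x • a) n = fourierCoeff f n • a := by
  simp_rw [fourierCoeff, smul_smul, smul_eq_mul, integral_smul_const]

lemma fourierCoeff_fourier_smul (n : ℤ) (a : E) :
    fourierCoeff (fun x : AddCircle T => fourier n x • a) = Pi.single n a := by
  ext m
  rw [fourierCoeff_smul_const, fourierCoeff_fourier]
  obtain rfl | hmn := eq_or_ne m n <;> simp [*]

lemma fourierCoeff_fourierSeries {c : ℤ → E} (hc : Summable fun n => ‖c n‖) :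
    fourierCoeff (fourierSeries (T := T) c) = c := by
  ext m
  have hint (n : ℤ) : Integrable (fun x : AddCircle T => fourier n x • c n) haarAddCircle :=
    ((fourier n).continuous.smul continuous_const).integrable_of_hasCompactSupport
      (HasCompactSupport.of_compactSpace _)
  have hsum : Summable fun n => ∫ x : AddCircle T, ‖fourier n x • c n‖ ∂haarAddCircle := by
    simpa only [norm_fourier_smul, integral_const, probReal_univ, one_smul] using hc
  unfold fourierSeries
  rw [fourierCoeff_tsum hint hsum m, tsum_eq_single m]
  · rw [fourierCoeff_fourier_smul, Pi.single_eq_same]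
  · intro n hnm
    rw [fourierCoeff_fourier_smul, Pi.single_eq_of_ne hnm.symm]

end FourierSeries

section Weights

variable {E : Type*} [NormedAddCommGroup E] [NormedSpace ℝ E]

lemma norm_rpow_neg_smul_le {x s : ℝ} (hx : 1 ≤ x) (hs : 0 ≤ s) (a : E) :
    ‖x ^ (-s) • a‖ ≤ ‖a‖ := by
  rw [norm_smul, Real.norm_of_nonneg (by positivity)]
  exact mul_le_of_le_one_left (norm_nonneg a)
    (Real.rpow_le_one_of_one_le_of_nonpos hx (neg_nonpos.mpr hs))

lemma rpow_mul_norm_rpow_neg_smul {x : ℝ} (hx : 0 < x) (s : ℝ) (a : E) :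
    x ^ s * ‖x ^ (-s) • a‖ = ‖a‖ := by
  rw [norm_smul, Real.norm_of_nonneg (by positivity), ← mul_assoc, ← Real.rpow_add hx,
    add_neg_cancel, Real.rpow_zero, one_mul]

end Weights

theorem inv_laplacian_surjective_general
    {A : Type} [NormedAddCommGroup A] [NormedSpace ℂ A] [CompleteSpace A]
    (γ : ℤ → ℝ) (s : ℝ) (hs : 0 < s)
    (g : AddCircle (1 : ℝ) → A)
    (hsum : Summable fun n : ℤ => ‖fourierCoeff g n‖) :
    ∃ h : AddCircle (1 : ℝ) → A, Continuous h ∧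
      (∀ n : ℤ, fourierCoeff h n = ((1 + γ n ^ 2) ^ (-s) : ℝ) • fourierCoeff g n) ∧
      (Summable fun n : ℤ => (1 + γ n ^ 2) ^ s * ‖fourierCoeff h n‖) ∧
      (∑' n : ℤ, (1 + γ n ^ 2) ^ s * ‖fourierCoeff h n‖) =
        ∑' n : ℤ, ‖fourierCoeff g n‖ := by
  set c : ℤ → A := fun n => ((1 + γ n ^ 2) ^ (-s) : ℝ) • fourierCoeff g n
  have hweight (n : ℤ) : 1 ≤ 1 + γ n ^ 2 := le_add_of_nonneg_right (sq_nonneg _)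
  have hc : Summable fun n => ‖c n‖ :=
    hsum.of_nonneg_of_le (fun _ => norm_nonneg _)
      fun n => norm_rpow_neg_smul_le (hweight n) hs.le _
  have hcoeff := fourierCoeff_fourierSeries (T := 1) hc
  have hisometry (n : ℤ) : (1 + γ n ^ 2) ^ s * ‖c n‖ = ‖fourierCoeff g n‖ :=
    rpow_mul_norm_rpow_neg_smul (one_pos.trans_le (hweight n)) s _
  refine ⟨fourierSeries c, continuous_fourierSeries hc, fun n => by rw [hcoeff], ?_, ?_⟩
  · simpa only [hcoeff, hisometry] using hsum
  · simp only [hcoeff, hisometry]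

theorem inv_laplacian_surjective
    {A : Type} [NormedAddCommGroup A] [NormedSpace ℂ A] [CompleteSpace A]
    (γ : ℤ → ℝ) (hγ : ∀ n, 0 < γ n) (s : ℝ) (hs : 0 < s)
    (g : AddCircle (1 : ℝ) → A) (hg : Integrable g haarAddCircle)
    (hsum : Summable fun n : ℤ => ‖fourierCoeff g n‖) :
    ∃ h : AddCircle (1 : ℝ) → A, Continuous h ∧
      (∀ n : ℤ, fourierCoeff h n = ((1 + γ n ^ 2) ^ (-s) : ℝ) • fourierCoeff g n) ∧
      (Summable fun n : ℤ => (1 + γ n ^ 2) ^ s * ‖fourierCoeff h n‖) ∧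
      (∑' n : ℤ, (1 + γ n ^ 2) ^ s * ‖fourierCoeff h n‖) =
        ∑' n : ℤ, ‖fourierCoeff g n‖ :=
  inv_laplacian_surjective_general γ s hs g hsum
end
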